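/- For all f, f* ∈ M, the operator W satisfies ‖W(f) − W(f*)‖ ≤ φ̂(α₀)·‖f − f*‖, where φ̂(α₀) := 2·L₂ᴹ·β·α₀^β·F̄₂(α₀)·exp(a·N₂ᴹ/(L₂ₘ·(β−σ−1)·α₀^{β−σ−2})) and F̄₂(α₀) = (α₀·a/(β·L₂ₘ²))·(N̄₂/((β−1)·α₀^{β−1}) + L̄₂·N₂ᴹ/(L₂ₘ·(2β−σ−1)·α₀^{2β−σ−1}))·α₀^{−β} + L̄₂/(2β·L₂ₘ²·α₀^{2β}). -/

import Mathlib

open Real Set Filter MeasureTheory Topology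

noncomputable section

/-- Sup norm on `[α₀,∞)`. -/
def supIci (α₀ : ℝ) (g : ℝ → ℝ) : ℝ := ⨆ ξ : Ici α₀, |g ξ.1|

/-- Membership in the space `M`: bounded continuous on `[α₀,∞)`, `f(α₀)=0`, `f(∞)=−1`. -/
def MemM (α₀ : ℝ) (f : ℝ → ℝ) : Prop :=
  ContinuousOn f (Ici α₀) ∧ (∃ C : ℝ, ∀ ξ ∈ Ici α₀, |f ξ| ≤ C) ∧
    f α₀ = 0 ∧ Tendsto f atTop (nhds (-1))

/-- `E₂(ξ,f) = exp(−α₀·a·∫_{α₀}^{ξ} N*(f)(s)/L*(f)(s) ds)`. -/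
def E2 (α₀ a : ℝ) (Lstar Nstar : (ℝ → ℝ) → ℝ → ℝ) (f : ℝ → ℝ) (ξ : ℝ) : ℝ :=
  Real.exp (-(α₀ * a * ∫ s in α₀..ξ, Nstar f s / Lstar f s))

/-- `F₂(ξ,f) = ∫_{α₀}^{ξ} E₂(s,f)/(s·L*(f)(s)) ds`. -/
def F2 (α₀ a : ℝ) (Lstar Nstar : (ℝ → ℝ) → ℝ → ℝ) (f : ℝ → ℝ) (ξ : ℝ) : ℝ :=
  ∫ s in α₀..ξ, E2 α₀ a Lstar Nstar f s / (s * Lstar f s)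

/-- The operator `W(f)(ξ) = −F₂(ξ,f)/F₂(∞,f)`, where `F₂(∞,f)` is given by `Finf f`. -/
def Wop (α₀ a : ℝ) (Lstar Nstar : (ℝ → ℝ) → ℝ → ℝ) (Finf : (ℝ → ℝ) → ℝ)
    (f : ℝ → ℝ) (ξ : ℝ) : ℝ :=
  -(F2 α₀ a Lstar Nstar f ξ / Finf f)

/-! Everything is controlled by power laws on `[α₀, ∞)`. Since `N*/L* ≤ (N₂ᴹ/L₂ₘ) s^(σ-β)` and
`β - σ > 1`, the exponent of `E₂` never exceeds `c = a N₂ᴹ / (L₂ₘ (β-σ-1) α₀^(β-σ-2))`, so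
`e^(-c) ≤ E₂ ≤ 1` and `F₂(∞, f) ≥ e^(-c) / (β L₂ᴹ α₀^β)`. With `D = ‖f - f*‖`, the Lipschitz
bounds on `L*`, `N*` give `|N*/L*(f) - N*/L*(f*)| ≤ D (c₁ s^(-β) + c₂ s^(σ-2β))`; integrating and
using that `x ↦ e^(-x)` is 1-Lipschitz on `x ≥ 0` bounds `|E₂(f) - E₂(f*)|`, and integrating
once more gives `|F₂(ξ, f) - F₂(ξ, f*)| ≤ F̄₂ D` uniformly in `ξ`, hence also at `ξ = ∞`.
Writing `W(f) - W(f*)` as a difference of quotients `F/F∞ - G/G∞` with `0 ≤ F ≤ F∞` then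
bounds it by `2 F̄₂ D / min(F₂(∞, f), F₂(∞, f*))`. -/

open scoped Interval

lemma exp_neg_sub_exp_neg_le {x : ℝ} (hx : 0 ≤ x) (y : ℝ) : exp (-x) - exp (-y) ≤ |x - y| := by
  have hxy : exp (-x) - exp (-y) ≤ exp (-x) * (y - x) := by
    have hsplit : exp (-y) = exp (-x) * exp (x - y) := by rw [← exp_add]; ring_nf
    nlinarith [add_one_le_exp (x - y), exp_pos (-x)]
  calc exp (-x) - exp (-y) ≤ exp (-x) * |x - y| :=
        hxy.trans (mul_le_mul_of_nonneg_left (abs_sub_comm x y ▸ le_abs_self _) (exp_pos _).le)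
    _ ≤ |x - y| := mul_le_of_le_one_left (abs_nonneg _) (exp_le_one_iff.2 (by linarith))

lemma abs_exp_neg_sub_exp_neg_le {x y : ℝ} (hx : 0 ≤ x) (hy : 0 ≤ y) :
    |exp (-x) - exp (-y)| ≤ |x - y| :=
  abs_sub_le_iff.2 ⟨exp_neg_sub_exp_neg_le hx y, abs_sub_comm x y ▸ exp_neg_sub_exp_neg_le hy x⟩

lemma abs_div_sub_div_le {x x' b b' : ℝ} (hb : 0 < b) (hb' : 0 < b') (hx' : 0 ≤ x') :
    |x / b - x' / b'| ≤ |x - x'| / b + x' * |b - b'| / (b * b') := by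
  have hsplit : x / b - x' / b' = (x - x') / b + x' * (b' - b) / (b * b') := by
    field_simp; ring
  rw [hsplit]
  refine (abs_add_le _ _).trans_eq ?_
  rw [abs_div, abs_div, abs_mul, abs_of_pos hb, abs_of_pos (mul_pos hb hb'), abs_of_nonneg hx',
    abs_sub_comm b']

lemma integral_rpow_neg_eq {α₀ x p : ℝ} (hα : 0 < α₀) (hx : α₀ ≤ x) (hp : 1 < p) :
    ∫ t in α₀..x, t ^ (-p) = 1 / ((p - 1) * α₀ ^ (p - 1)) - 1 / ((p - 1) * x ^ (p - 1)) := by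
  have hp1 : p - 1 ≠ 0 := by linarith
  have hαp : α₀ ^ (p - 1) ≠ 0 := (rpow_pos_of_pos hα _).ne'
  have hxp : x ^ (p - 1) ≠ 0 := (rpow_pos_of_pos (hα.trans_le hx) _).ne'
  rw [integral_rpow (Or.inr ⟨by linarith, by simp [uIcc_of_le hx, hα.not_ge]⟩),
    show -p + 1 = -(p - 1) by ring, rpow_neg hα.le, rpow_neg (hα.le.trans hx)]
  field_simp
  ring

lemma integral_rpow_neg_le {α₀ x p : ℝ} (hα : 0 < α₀) (hx : α₀ ≤ x) (hp : 1 < p) :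
    ∫ t in α₀..x, t ^ (-p) ≤ 1 / ((p - 1) * α₀ ^ (p - 1)) := by
  have hxp : 0 < x ^ (p - 1) := rpow_pos_of_pos (hα.trans_le hx) _
  rw [integral_rpow_neg_eq hα hx hp]
  exact sub_le_self _ (one_div_nonneg.2 (mul_nonneg (by linarith) hxp.le))

lemma tendsto_integral_rpow_neg {α₀ p : ℝ} (hα : 0 < α₀) (hp : 1 < p) :
    Tendsto (fun x => ∫ t in α₀..x, t ^ (-p)) atTop (𝓝 (1 / ((p - 1) * α₀ ^ (p - 1)))) := by
  have hlim : Tendsto (fun x : ℝ => 1 / ((p - 1) * α₀ ^ (p - 1)) - 1 / ((p - 1) * x ^ (p - 1)))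
      atTop (𝓝 (1 / ((p - 1) * α₀ ^ (p - 1)) - 0)) :=
    tendsto_const_nhds.sub <| tendsto_const_nhds.div_atTop <|
      (tendsto_rpow_atTop (by linarith)).const_mul_atTop (by linarith)
  rw [sub_zero] at hlim
  refine hlim.congr' ?_
  filter_upwards [eventually_ge_atTop α₀] with x hx
  rw [integral_rpow_neg_eq hα hx hp]

lemma intervalIntegrable_rpow_of_pos {α₀ x r : ℝ} (hα : 0 < α₀) (hx : α₀ ≤ x) :
    IntervalIntegrable (fun t => t ^ r) volume α₀ x :=
  intervalIntegral.intervalIntegrable_rpow (Or.inr (by simp [uIcc_of_le hx, hα.not_ge]))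

lemma abs_integral_le_of_abs_le_rpow_add {α₀ x p q A B : ℝ} {g : ℝ → ℝ} (hα : 0 < α₀)
    (hx : α₀ ≤ x) (hp : 1 < p) (hq : 1 < q) (hA : 0 ≤ A) (hB : 0 ≤ B)
    (hg : ∀ t ∈ Ici α₀, |g t| ≤ A * t ^ (-p) + B * t ^ (-q)) :
    |∫ t in α₀..x, g t| ≤ A / ((p - 1) * α₀ ^ (p - 1)) + B / ((q - 1) * α₀ ^ (q - 1)) := by
  have hp_int := intervalIntegrable_rpow_of_pos (r := -p) hα hx
  have hq_int := intervalIntegrable_rpow_of_pos (r := -q) hα hx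
  rw [← Real.norm_eq_abs]
  calc ‖∫ t in α₀..x, g t‖ ≤ ∫ t in α₀..x, (A * t ^ (-p) + B * t ^ (-q)) :=
        intervalIntegral.norm_integral_le_of_norm_le hx
          (ae_of_all _ fun t ht => hg t ht.1.le) ((hp_int.const_mul A).add (hq_int.const_mul B))
    _ = A * (∫ t in α₀..x, t ^ (-p)) + B * ∫ t in α₀..x, t ^ (-q) := by
        rw [intervalIntegral.integral_add (hp_int.const_mul A) (hq_int.const_mul B),
          intervalIntegral.integral_const_mul, intervalIntegral.integral_const_mul]
    _ ≤ A * (1 / ((p - 1) * α₀ ^ (p - 1))) + B * (1 / ((q - 1) * α₀ ^ (q - 1))) := by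
        gcongr
        · exact integral_rpow_neg_le hα hx hp
        · exact integral_rpow_neg_le hα hx hq
    _ = _ := by rw [mul_one_div, mul_one_div]

lemma abs_div_sub_div_le_two_mul_div {F G Fi Gi m δ : ℝ} (hF : 0 ≤ F) (hFFi : F ≤ Fi)
    (hm : 0 < m) (hmFi : m ≤ Fi) (hmGi : m ≤ Gi) (hFG : |F - G| ≤ δ) (hFGi : |Fi - Gi| ≤ δ) :
    |F / Fi - G / Gi| ≤ 2 * δ / m := by
  have hFi : 0 < Fi := hm.trans_le hmFi
  have hGi : 0 < Gi := hm.trans_le hmGi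
  have hδ : 0 ≤ δ := (abs_nonneg _).trans hFG
  rw [abs_sub_comm] at hFG hFGi ⊢
  calc |G / Gi - F / Fi| ≤ |G - F| / Gi + F * |Gi - Fi| / (Gi * Fi) := abs_div_sub_div_le hGi hFi hF
    _ = |G - F| / Gi + F / Fi * (|Gi - Fi| / Gi) := by ring
    _ ≤ δ / m + 1 * (δ / m) := by
        gcongr
        exact (div_le_one hFi).2 hFFi
    _ = 2 * δ / m := by ring

structure PowerLawCoeffs (α₀ β σ Lm LM NM : ℝ) (L N : ℝ → ℝ) : Prop where
  continuousOn_L : ContinuousOn L (Ici α₀)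
  continuousOn_N : ContinuousOn N (Ici α₀)
  lower_L : ∀ t ∈ Ici α₀, Lm * t ^ β ≤ L t
  upper_L : ∀ t ∈ Ici α₀, L t ≤ LM * t ^ β
  nonneg_N : ∀ t ∈ Ici α₀, 0 ≤ N t
  upper_N : ∀ t ∈ Ici α₀, N t ≤ NM * t ^ σ

namespace PowerLawCoeffs

variable {α₀ β σ Lm LM NM x εL εN : ℝ} {L N L₁ N₁ L₂ N₂ : ℝ → ℝ}

lemma pos_L (h : PowerLawCoeffs α₀ β σ Lm LM NM L N) (hα : 0 < α₀) (hLm : 0 < Lm)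
    {t : ℝ} (ht : t ∈ Ici α₀) : 0 < L t :=
  (mul_pos hLm (rpow_pos_of_pos (hα.trans_le ht) β)).trans_le (h.lower_L t ht)

lemma nonneg_NM (h : PowerLawCoeffs α₀ β σ Lm LM NM L N) (hα : 0 < α₀) : 0 ≤ NM :=
  nonneg_of_mul_nonneg_left ((h.nonneg_N α₀ self_mem_Ici).trans (h.upper_N α₀ self_mem_Ici))
    (rpow_pos_of_pos hα σ)

lemma intervalIntegrable_div (h : PowerLawCoeffs α₀ β σ Lm LM NM L N) (hα : 0 < α₀)
    (hLm : 0 < Lm) (hx : α₀ ≤ x) : IntervalIntegrable (fun t => N t / L t) volume α₀ x := by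
  refine ContinuousOn.intervalIntegrable ?_
  rw [uIcc_of_le hx]
  exact (h.continuousOn_N.div h.continuousOn_L fun _ ht => (h.pos_L hα hLm ht).ne').mono
    Icc_subset_Ici_self

lemma integral_div_nonneg (h : PowerLawCoeffs α₀ β σ Lm LM NM L N) (hα : 0 < α₀)
    (hLm : 0 < Lm) (hx : α₀ ≤ x) : 0 ≤ ∫ t in α₀..x, N t / L t :=
  intervalIntegral.integral_nonneg hx fun t ht =>
    div_nonneg (h.nonneg_N t ht.1) (h.pos_L hα hLm ht.1).le

lemma integral_div_le (h : PowerLawCoeffs α₀ β σ Lm LM NM L N) (hα : 0 < α₀) (hLm : 0 < Lm)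
    (hβσ : 1 < β - σ) (hx : α₀ ≤ x) :
    ∫ t in α₀..x, N t / L t ≤ NM / Lm / ((β - σ - 1) * α₀ ^ (β - σ - 1)) := by
  have hpow : ∀ t ∈ Icc α₀ x, N t / L t ≤ NM / Lm * t ^ (-(β - σ)) := by
    intro t ht
    have ht0 : 0 < t := hα.trans_le ht.1
    calc N t / L t ≤ NM * t ^ σ / (Lm * t ^ β) :=
          div_le_div₀ ((h.nonneg_N t ht.1).trans (h.upper_N t ht.1)) (h.upper_N t ht.1)
            (by positivity) (h.lower_L t ht.1)
      _ = NM / Lm * t ^ (-(β - σ)) := by rw [neg_sub, rpow_sub ht0]; ring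
  calc ∫ t in α₀..x, N t / L t ≤ ∫ t in α₀..x, NM / Lm * t ^ (-(β - σ)) :=
        intervalIntegral.integral_mono_on hx (h.intervalIntegrable_div hα hLm hx)
          ((intervalIntegrable_rpow_of_pos hα hx).const_mul _) hpow
    _ = NM / Lm * ∫ t in α₀..x, t ^ (-(β - σ)) := intervalIntegral.integral_const_mul _ _
    _ ≤ NM / Lm * (1 / ((β - σ - 1) * α₀ ^ (β - σ - 1))) :=
        mul_le_mul_of_nonneg_left (integral_rpow_neg_le hα hx hβσ)
          (div_nonneg (h.nonneg_NM hα) hLm.le)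
    _ = _ := mul_one_div _ _

lemma abs_integral_div_sub_le (h₁ : PowerLawCoeffs α₀ β σ Lm LM NM L₁ N₁)
    (h₂ : PowerLawCoeffs α₀ β σ Lm LM NM L₂ N₂) (hα : 0 < α₀) (hLm : 0 < Lm) (hβ : 1 < β)
    (hβσ : 1 < 2 * β - σ) (hL : ∀ t ∈ Ici α₀, |L₁ t - L₂ t| ≤ εL)
    (hN : ∀ t ∈ Ici α₀, |N₁ t - N₂ t| ≤ εN) (hx : α₀ ≤ x) :
    |(∫ t in α₀..x, N₁ t / L₁ t) - ∫ t in α₀..x, N₂ t / L₂ t| ≤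
      εN / Lm / ((β - 1) * α₀ ^ (β - 1)) +
        εL * NM / Lm ^ 2 / ((2 * β - σ - 1) * α₀ ^ (2 * β - σ - 1)) := by
  have hεL : 0 ≤ εL := (abs_nonneg _).trans (hL α₀ self_mem_Ici)
  have hεN : 0 ≤ εN := (abs_nonneg _).trans (hN α₀ self_mem_Ici)
  have hNM := h₂.nonneg_NM hα
  rw [← intervalIntegral.integral_sub (h₁.intervalIntegrable_div hα hLm hx)
    (h₂.intervalIntegrable_div hα hLm hx)]
  refine abs_integral_le_of_abs_le_rpow_add hα hx hβ hβσ (by positivity) (by positivity)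
    fun t ht => ?_
  have ht0 : 0 < t := hα.trans_le ht
  have hLt : 0 < Lm * t ^ β := by positivity
  calc |N₁ t / L₁ t - N₂ t / L₂ t|
      ≤ |N₁ t - N₂ t| / L₁ t + N₂ t * |L₁ t - L₂ t| / (L₁ t * L₂ t) :=
        abs_div_sub_div_le (h₁.pos_L hα hLm ht) (h₂.pos_L hα hLm ht) (h₂.nonneg_N t ht)
    _ ≤ εN / (Lm * t ^ β) + NM * t ^ σ * εL / ((Lm * t ^ β) * (Lm * t ^ β)) :=
        add_le_add (div_le_div₀ hεN (hN t ht) hLt (h₁.lower_L t ht))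
          (div_le_div₀ (by positivity)
            (mul_le_mul (h₂.upper_N t ht) (hL t ht) (abs_nonneg _) (by positivity))
            (by positivity)
            (mul_le_mul (h₁.lower_L t ht) (h₂.lower_L t ht) hLt.le (h₁.pos_L hα hLm ht).le))
    _ = εN / Lm * t ^ (-β) + εL * NM / Lm ^ 2 * t ^ (-(2 * β - σ)) := by
        rw [rpow_neg ht0.le, show -(2 * β - σ) = σ - β - β by ring, rpow_sub ht0, rpow_sub ht0]
        field_simp

end PowerLawCoeffs

section Operators

variable {α₀ a β σ Lm LM NM x δ εL : ℝ} {Lstar Nstar : (ℝ → ℝ) → ℝ → ℝ} {g f₁ f₂ : ℝ → ℝ}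

lemma E2_le_one (h : PowerLawCoeffs α₀ β σ Lm LM NM (Lstar g) (Nstar g)) (hα : 0 < α₀)
    (hLm : 0 < Lm) (ha : 0 ≤ a) (hx : α₀ ≤ x) : E2 α₀ a Lstar Nstar g x ≤ 1 :=
  exp_le_one_iff.2 <| neg_nonpos.2 <|
    mul_nonneg (mul_nonneg hα.le ha) (h.integral_div_nonneg hα hLm hx)

lemma exp_neg_le_E2 (h : PowerLawCoeffs α₀ β σ Lm LM NM (Lstar g) (Nstar g)) (hα : 0 < α₀)
    (hLm : 0 < Lm) (ha : 0 ≤ a) (hβσ : 1 < β - σ) (hx : α₀ ≤ x) :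
    exp (-(a * NM / (Lm * (β - σ - 1) * α₀ ^ (β - σ - 2)))) ≤ E2 α₀ a Lstar Nstar g x := by
  have hc : α₀ * a * (NM / Lm / ((β - σ - 1) * α₀ ^ (β - σ - 1))) =
      a * NM / (Lm * (β - σ - 1) * α₀ ^ (β - σ - 2)) := by
    rw [show β - σ - 2 = β - σ - 1 - 1 by ring, rpow_sub_one hα.ne' (β - σ - 1)]
    field_simp
  rw [E2, ← hc]
  exact exp_le_exp.2 <| neg_le_neg <|
    mul_le_mul_of_nonneg_left (h.integral_div_le hα hLm hβσ hx) (mul_nonneg hα.le ha)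

lemma E2_div_nonneg (h : PowerLawCoeffs α₀ β σ Lm LM NM (Lstar g) (Nstar g)) (hα : 0 < α₀)
    (hLm : 0 < Lm) (hx : x ∈ Ici α₀) : 0 ≤ E2 α₀ a Lstar Nstar g x / (x * Lstar g x) :=
  div_nonneg (exp_pos _).le (mul_pos (hα.trans_le hx) (h.pos_L hα hLm hx)).le

lemma intervalIntegrable_E2_div (h : PowerLawCoeffs α₀ β σ Lm LM NM (Lstar g) (Nstar g))
    (hα : 0 < α₀) (hLm : 0 < Lm) (hx : α₀ ≤ x) :
    IntervalIntegrable (fun s => E2 α₀ a Lstar Nstar g s / (s * Lstar g s)) volume α₀ x := by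
  have hsub : [[α₀, x]] ⊆ Ici α₀ := by rw [uIcc_of_le hx]; exact Icc_subset_Ici_self
  have hprim := intervalIntegral.continuousOn_primitive_interval'
    (h.intervalIntegrable_div hα hLm hx) left_mem_uIcc
  refine ContinuousOn.intervalIntegrable (ContinuousOn.div ?_ ?_ fun s hs => ?_)
  · exact continuous_exp.comp_continuousOn ((hprim.const_smul (α₀ * a)).neg)
  · exact continuousOn_id.mul (h.continuousOn_L.mono hsub)
  · exact (mul_pos (hα.trans_le (hsub hs)) (h.pos_L hα hLm (hsub hs))).ne'

lemma F2_nonneg (h : PowerLawCoeffs α₀ β σ Lm LM NM (Lstar g) (Nstar g)) (hα : 0 < α₀)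
    (hLm : 0 < Lm) (hx : α₀ ≤ x) : 0 ≤ F2 α₀ a Lstar Nstar g x :=
  intervalIntegral.integral_nonneg hx fun _ hs => E2_div_nonneg h hα hLm hs.1

lemma F2_le_of_tendsto {Fi : ℝ} (h : PowerLawCoeffs α₀ β σ Lm LM NM (Lstar g) (Nstar g))
    (hα : 0 < α₀) (hLm : 0 < Lm) (hF : Tendsto (F2 α₀ a Lstar Nstar g) atTop (𝓝 Fi))
    (hx : α₀ ≤ x) : F2 α₀ a Lstar Nstar g x ≤ Fi := by
  refine ge_of_tendsto hF ?_
  filter_upwards [eventually_ge_atTop x] with y hy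
  refine intervalIntegral.integral_mono_interval le_rfl hx hy ?_
    (intervalIntegrable_E2_div h hα hLm (hx.trans hy))
  exact (ae_restrict_iff' measurableSet_Ioc).2
    (ae_of_all _ fun s hs => E2_div_nonneg h hα hLm hs.1.le)

lemma le_of_tendsto_F2 {Fi e : ℝ} (h : PowerLawCoeffs α₀ β σ Lm LM NM (Lstar g) (Nstar g))
    (hα : 0 < α₀) (hLm : 0 < Lm) (hβ : 0 < β)
    (hF : Tendsto (F2 α₀ a Lstar Nstar g) atTop (𝓝 Fi))
    (he : ∀ s ∈ Ici α₀, e ≤ E2 α₀ a Lstar Nstar g s) :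
    e / LM / (β * α₀ ^ β) ≤ Fi := by
  have hlim := tendsto_integral_rpow_neg (p := β + 1) hα (by linarith)
  rw [add_sub_cancel_right] at hlim
  rw [div_eq_mul_one_div (e / LM)]
  refine le_of_tendsto_of_tendsto (hlim.const_mul (e / LM)) hF ?_
  filter_upwards [eventually_ge_atTop α₀] with x hx
  rw [← intervalIntegral.integral_const_mul]
  refine intervalIntegral.integral_mono_on hx ((intervalIntegrable_rpow_of_pos hα hx).const_mul _)
    (intervalIntegrable_E2_div h hα hLm hx) fun s hs => ?_
  have hs0 : 0 < s := hα.trans_le hs.1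
  calc e / LM * s ^ (-(β + 1)) = e / (s * (LM * s ^ β)) := by
        rw [rpow_neg hs0.le, rpow_add_one hs0.ne']; ring
    _ ≤ E2 α₀ a Lstar Nstar g s / (s * Lstar g s) :=
        div_le_div₀ (exp_pos _).le (he s hs.1) (mul_pos hs0 (h.pos_L hα hLm hs.1))
          (mul_le_mul_of_nonneg_left (h.upper_L s hs.1) hs0.le)

lemma abs_E2_sub_le (h₁ : PowerLawCoeffs α₀ β σ Lm LM NM (Lstar f₁) (Nstar f₁))
    (h₂ : PowerLawCoeffs α₀ β σ Lm LM NM (Lstar f₂) (Nstar f₂)) (hα : 0 < α₀) (hLm : 0 < Lm)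
    (ha : 0 ≤ a) (hx : α₀ ≤ x)
    (hI : |(∫ t in α₀..x, Nstar f₁ t / Lstar f₁ t) - ∫ t in α₀..x, Nstar f₂ t / Lstar f₂ t| ≤ δ) :
    |E2 α₀ a Lstar Nstar f₁ x - E2 α₀ a Lstar Nstar f₂ x| ≤ α₀ * a * δ := by
  have hαa : 0 ≤ α₀ * a := mul_nonneg hα.le ha
  refine (abs_exp_neg_sub_exp_neg_le (mul_nonneg hαa (h₁.integral_div_nonneg hα hLm hx))
    (mul_nonneg hαa (h₂.integral_div_nonneg hα hLm hx))).trans ?_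
  rw [← mul_sub, abs_mul, abs_of_nonneg hαa]
  exact mul_le_mul_of_nonneg_left hI hαa

lemma abs_F2_sub_le (h₁ : PowerLawCoeffs α₀ β σ Lm LM NM (Lstar f₁) (Nstar f₁))
    (h₂ : PowerLawCoeffs α₀ β σ Lm LM NM (Lstar f₂) (Nstar f₂)) (hα : 0 < α₀) (hLm : 0 < Lm)
    (ha : 0 ≤ a) (hβ : 0 < β) (hL : ∀ t ∈ Ici α₀, |Lstar f₁ t - Lstar f₂ t| ≤ εL)
    (hE : ∀ s ∈ Ici α₀, |E2 α₀ a Lstar Nstar f₁ s - E2 α₀ a Lstar Nstar f₂ s| ≤ δ)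
    (hx : α₀ ≤ x) :
    |F2 α₀ a Lstar Nstar f₁ x - F2 α₀ a Lstar Nstar f₂ x| ≤
      δ / Lm / (β * α₀ ^ β) + εL / Lm ^ 2 / (2 * β * α₀ ^ (2 * β)) := by
  have hεL : 0 ≤ εL := (abs_nonneg _).trans (hL α₀ self_mem_Ici)
  have hδ : 0 ≤ δ := (abs_nonneg _).trans (hE α₀ self_mem_Ici)
  rw [F2, F2, ← intervalIntegral.integral_sub (intervalIntegrable_E2_div h₁ hα hLm hx)
    (intervalIntegrable_E2_div h₂ hα hLm hx)]
  refine (abs_integral_le_of_abs_le_rpow_add (p := β + 1) (q := 2 * β + 1)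
    (B := εL / Lm ^ 2) hα hx (by linarith)
    (by linarith) (div_nonneg hδ hLm.le) (by positivity) fun s hs => ?_).trans_eq
    (by rw [add_sub_cancel_right, add_sub_cancel_right])
  have hs0 : 0 < s := hα.trans_le hs
  have hLs : 0 < s * (Lm * s ^ β) := by positivity
  have hL₁ := mul_le_mul_of_nonneg_left (h₁.lower_L s hs) hs0.le
  have hL₂ := mul_le_mul_of_nonneg_left (h₂.lower_L s hs) hs0.le
  have hb₁ : 0 < s * Lstar f₁ s := hLs.trans_le hL₁
  have hdiff : |s * Lstar f₁ s - s * Lstar f₂ s| ≤ s * εL := by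
    rw [← mul_sub, abs_mul, abs_of_pos hs0]
    exact mul_le_mul_of_nonneg_left (hL s hs) hs0.le
  calc |E2 α₀ a Lstar Nstar f₁ s / (s * Lstar f₁ s) - E2 α₀ a Lstar Nstar f₂ s / (s * Lstar f₂ s)|
      ≤ |E2 α₀ a Lstar Nstar f₁ s - E2 α₀ a Lstar Nstar f₂ s| / (s * Lstar f₁ s) +
          E2 α₀ a Lstar Nstar f₂ s * |s * Lstar f₁ s - s * Lstar f₂ s| /
            (s * Lstar f₁ s * (s * Lstar f₂ s)) :=
        abs_div_sub_div_le hb₁ (hLs.trans_le hL₂) (exp_pos _).le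
    _ ≤ δ / (s * (Lm * s ^ β)) + 1 * (s * εL) / (s * (Lm * s ^ β) * (s * (Lm * s ^ β))) := by
        gcongr
        exacts [hE s hs, E2_le_one h₂ hα hLm ha hs]
    _ = δ / Lm * s ^ (-(β + 1)) + εL / Lm ^ 2 * s ^ (-(2 * β + 1)) := by
        rw [rpow_neg hs0.le, rpow_neg hs0.le, rpow_add_one hs0.ne',
          show 2 * β + 1 = β + β + 1 by ring, rpow_add_one hs0.ne', rpow_add hs0]
        field_simp

lemma abs_Wop_sub_le {Finf : (ℝ → ℝ) → ℝ} {m ξ : ℝ}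
    (h₁ : PowerLawCoeffs α₀ β σ Lm LM NM (Lstar f₁) (Nstar f₁)) (hα : 0 < α₀) (hLm : 0 < Lm)
    (hF₁ : Tendsto (F2 α₀ a Lstar Nstar f₁) atTop (𝓝 (Finf f₁)))
    (hF₂ : Tendsto (F2 α₀ a Lstar Nstar f₂) atTop (𝓝 (Finf f₂)))
    (hm : 0 < m) (hm₁ : m ≤ Finf f₁) (hm₂ : m ≤ Finf f₂)
    (hF : ∀ x ∈ Ici α₀, |F2 α₀ a Lstar Nstar f₁ x - F2 α₀ a Lstar Nstar f₂ x| ≤ δ)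
    (hξ : ξ ∈ Ici α₀) :
    |Wop α₀ a Lstar Nstar Finf f₁ ξ - Wop α₀ a Lstar Nstar Finf f₂ ξ| ≤ 2 * δ / m := by
  have hFinf : |Finf f₁ - Finf f₂| ≤ δ :=
    le_of_tendsto ((hF₁.sub hF₂).abs) (eventually_ge_atTop α₀ |>.mono hF)
  rw [Wop, Wop, neg_sub_neg, abs_sub_comm]
  exact abs_div_sub_div_le_two_mul_div (F2_nonneg h₁ hα hLm hξ) (F2_le_of_tendsto h₁ hα hLm hF₁ hξ)
    hm hm₁ hm₂ (hF ξ hξ) hFinf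

end Operators

theorem statement9_general
    (α₀ a β σ L2m L2M N2m N2M Lbar2 Nbar2 : ℝ)
    (hα₀ : 0 < α₀) (ha : 0 < a)
    (hσpos : 0 < σ) (hL2m : 0 < L2m) (hL2M : 0 < L2M)
    (hN2m : 0 < N2m)
    (hβ : σ + 2 < β)
    (Lstar Nstar : (ℝ → ℝ) → ℝ → ℝ)
    (hLcont : ∀ f : ℝ → ℝ, MemM α₀ f → ContinuousOn (Lstar f) (Ici α₀))
    (hNcont : ∀ f : ℝ → ℝ, MemM α₀ f → ContinuousOn (Nstar f) (Ici α₀))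
    (hLbd : ∀ f : ℝ → ℝ, MemM α₀ f → ∀ ξ ∈ Ici α₀,
      L2m * ξ ^ β ≤ Lstar f ξ ∧ Lstar f ξ ≤ L2M * ξ ^ β)
    (hNbd : ∀ f : ℝ → ℝ, MemM α₀ f → ∀ ξ ∈ Ici α₀,
      N2m * ξ ^ σ ≤ Nstar f ξ ∧ Nstar f ξ ≤ N2M * ξ ^ σ)
    (hLlip : ∀ f fs : ℝ → ℝ, MemM α₀ f → MemM α₀ fs → ∀ ξ ∈ Ici α₀,
      |Lstar f ξ - Lstar fs ξ| ≤ Lbar2 * supIci α₀ (fun x => f x - fs x))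
    (hNlip : ∀ f fs : ℝ → ℝ, MemM α₀ f → MemM α₀ fs → ∀ ξ ∈ Ici α₀,
      |Nstar f ξ - Nstar fs ξ| ≤ Nbar2 * supIci α₀ (fun x => f x - fs x))
    (Finf : (ℝ → ℝ) → ℝ)
    (hFinf : ∀ f : ℝ → ℝ, MemM α₀ f →
      Tendsto (F2 α₀ a Lstar Nstar f) atTop (nhds (Finf f)))
    (f fs : ℝ → ℝ) (hf : MemM α₀ f) (hfs : MemM α₀ fs) :
    supIci α₀ (fun ξ => Wop α₀ a Lstar Nstar Finf f ξ - Wop α₀ a Lstar Nstar Finf fs ξ) ≤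
      2 * L2M * β * α₀ ^ β *
          ((α₀ * a / (β * L2m ^ 2)) * (Nbar2 / ((β - 1) * α₀ ^ (β - 1)) +
                Lbar2 * N2M / (L2m * (2 * β - σ - 1) * α₀ ^ (2 * β - σ - 1))) * α₀ ^ (-β) +
              Lbar2 / (2 * β * L2m ^ 2 * α₀ ^ (2 * β))) *
          Real.exp (a * N2M / (L2m * (β - σ - 1) * α₀ ^ (β - σ - 2))) *
        supIci α₀ (fun x => f x - fs x) := by
  have hβ1 : 1 < β := by linarith
  have hcoeffs : ∀ g, MemM α₀ g → PowerLawCoeffs α₀ β σ L2m L2M N2M (Lstar g) (Nstar g) :=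
    fun g hg => ⟨hLcont g hg, hNcont g hg, fun t ht => (hLbd g hg t ht).1,
      fun t ht => (hLbd g hg t ht).2,
      fun t ht => (mul_nonneg hN2m.le (rpow_nonneg (hα₀.le.trans ht) σ)).trans (hNbd g hg t ht).1,
      fun t ht => (hNbd g hg t ht).2⟩
  have h₁ := hcoeffs f hf
  have h₂ := hcoeffs fs hfs
  have hE (s : ℝ) (hs : s ∈ Ici α₀) := abs_E2_sub_le h₁ h₂ hα₀ hL2m ha.le hs
    (h₁.abs_integral_div_sub_le h₂ hα₀ hL2m hβ1 (by linarith) (hLlip f fs hf hfs)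
      (hNlip f fs hf hfs) hs)
  have hF (x : ℝ) (hx : x ∈ Ici α₀) :=
    abs_F2_sub_le h₁ h₂ hα₀ hL2m ha.le (by linarith) (hLlip f fs hf hfs) hE hx
  have hFinf_ge (g : ℝ → ℝ) (hg : MemM α₀ g) :=
    le_of_tendsto_F2 (LM := L2M) (hcoeffs g hg) hα₀ hL2m (by linarith) (hFinf g hg)
      fun s hs => exp_neg_le_E2 (hcoeffs g hg) hα₀ hL2m ha.le (by linarith) hs
  have hW (ξ : ℝ) (hξ : ξ ∈ Ici α₀) := abs_Wop_sub_le h₁ hα₀ hL2m (hFinf f hf) (hFinf fs hfs)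
    (by positivity) (hFinf_ge f hf) (hFinf_ge fs hfs) hF hξ
  have : Nonempty (Ici α₀) := ⟨⟨α₀, self_mem_Ici⟩⟩
  refine (ciSup_le fun ξ : Ici α₀ => hW ξ.1 ξ.2).trans_eq ?_
  rw [rpow_neg hα₀.le, exp_neg]
  field_simp

theorem statement9
    (α₀ a β σ L2m L2M N2m N2M Lbar2 Nbar2 : ℝ)
    (hα₀ : 0 < α₀) (ha : 0 < a)
    (hβpos : 0 < β) (hσpos : 0 < σ) (hL2m : 0 < L2m) (hL2M : 0 < L2M)
    (hN2m : 0 < N2m) (hN2M : 0 < N2M) (hLbar2 : 0 < Lbar2) (hNbar2 : 0 < Nbar2)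
    (hβ : σ + 2 < β) (hLmM : L2m ≤ L2M) (hNmM : N2m ≤ N2M)
    (Lstar Nstar : (ℝ → ℝ) → ℝ → ℝ)
    (hLcont : ∀ f : ℝ → ℝ, MemM α₀ f → ContinuousOn (Lstar f) (Ici α₀))
    (hNcont : ∀ f : ℝ → ℝ, MemM α₀ f → ContinuousOn (Nstar f) (Ici α₀))
    (hLbd : ∀ f : ℝ → ℝ, MemM α₀ f → ∀ ξ ∈ Ici α₀,
      L2m * ξ ^ β ≤ Lstar f ξ ∧ Lstar f ξ ≤ L2M * ξ ^ β)
    (hNbd : ∀ f : ℝ → ℝ, MemM α₀ f → ∀ ξ ∈ Ici α₀,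
      N2m * ξ ^ σ ≤ Nstar f ξ ∧ Nstar f ξ ≤ N2M * ξ ^ σ)
    (hLlip : ∀ f fs : ℝ → ℝ, MemM α₀ f → MemM α₀ fs → ∀ ξ ∈ Ici α₀,
      |Lstar f ξ - Lstar fs ξ| ≤ Lbar2 * supIci α₀ (fun x => f x - fs x))
    (hNlip : ∀ f fs : ℝ → ℝ, MemM α₀ f → MemM α₀ fs → ∀ ξ ∈ Ici α₀,
      |Nstar f ξ - Nstar fs ξ| ≤ Nbar2 * supIci α₀ (fun x => f x - fs x))
    (Finf : (ℝ → ℝ) → ℝ)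
    (hFinf : ∀ f : ℝ → ℝ, MemM α₀ f →
      Tendsto (F2 α₀ a Lstar Nstar f) atTop (nhds (Finf f)))
    (f fs : ℝ → ℝ) (hf : MemM α₀ f) (hfs : MemM α₀ fs) :
    supIci α₀ (fun ξ => Wop α₀ a Lstar Nstar Finf f ξ - Wop α₀ a Lstar Nstar Finf fs ξ) ≤
      2 * L2M * β * α₀ ^ β *
          ((α₀ * a / (β * L2m ^ 2)) * (Nbar2 / ((β - 1) * α₀ ^ (β - 1)) +
                Lbar2 * N2M / (L2m * (2 * β - σ - 1) * α₀ ^ (2 * β - σ - 1))) * α₀ ^ (-β) +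
              Lbar2 / (2 * β * L2m ^ 2 * α₀ ^ (2 * β))) *
          Real.exp (a * N2M / (L2m * (β - σ - 1) * α₀ ^ (β - σ - 2))) *
        supIci α₀ (fun x => f x - fs x) :=
  statement9_general α₀ a β σ L2m L2M N2m N2M Lbar2 Nbar2 hα₀ ha hσpos hL2m hL2M hN2m hβ Lstar Nstar
    hLcont hNcont hLbd hNbd hLlip hNlip Finf hFinf f fs hf hfs
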